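/- If n = 3, then the vanishing ideal I(X) of the degenerate projective torus X ⊆ ℙ^2 is minimally generated by at most 3 binomials. -/

import Mathlib

/-!
Evaluated at `(x₁ ^ v₁, x₂ ^ v₂, x₃ ^ v₃)`, the monomial `t ^ a` becomes the character
`x ↦ ∏ xᵢ ^ (vᵢ aᵢ)` of the torus, and two such characters agree iff `aᵢ ≡ bᵢ (mod dᵢ)` for all `i`.
By Artin's linear independence of characters, the coefficients of a polynomial vanishing on `X`
sum to zero over each character class, so a homogeneous such polynomial is a combination of
binomials `t ^ a - t ^ b` with `deg a = deg b` and `a ≡ b (mod d)`.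

In three variables these binomials all lie in the ideal of the three critical binomials
`tᵢ ^ sᵢ - t ^ cᵢ`, where `sᵢ` is the least positive degree at which `tᵢ ^ sᵢ` is congruent to a
monomial `t ^ cᵢ` free of `tᵢ`. Induct on the degree: if `t ^ a` and `t ^ b` share a variable,
cancel it. Otherwise one of them is a pure power `tᵢ ^ n`; minimality gives `sᵢ ≤ n`, and
`tᵢ ^ n ≡ tᵢ ^ (n - sᵢ) t ^ cᵢ` involves a second variable. With only three variables, at most
two such rewrites produce a pair sharing a variable.
-/

open MvPolynomial Finsupp

namespace DegenerateTorus

variable {σ : Type*}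

def SameFiber (d : σ → ℕ) (a b : σ →₀ ℕ) : Prop :=
  a.degree = b.degree ∧ ∀ i, a i ≡ b i [MOD d i]

namespace SameFiber

variable {d : σ → ℕ} {a b c : σ →₀ ℕ}

theorem symm (h : SameFiber d a b) : SameFiber d b a :=
  ⟨h.1.symm, fun i => (h.2 i).symm⟩

theorem trans (h : SameFiber d a b) (h' : SameFiber d b c) : SameFiber d a c :=
  ⟨h.1.trans h'.1, fun i => (h.2 i).trans (h'.2 i)⟩

end SameFiber

theorem sameFiber_add_left_iff {d : σ → ℕ} {a b c : σ →₀ ℕ} :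
    SameFiber d (c + a) (c + b) ↔ SameFiber d a b := by
  simp only [SameFiber, map_add, add_right_inj, Finsupp.coe_add, Pi.add_apply]
  exact and_congr_right' <| forall_congr' fun i =>
    ⟨Nat.ModEq.add_left_cancel' _, Nat.ModEq.add_left _⟩

theorem eq_single_degree_of_support_subset {c : σ →₀ ℕ} {i : σ} (h : c.support ⊆ {i}) :
    c = single i c.degree := by
  conv_rhs => rw [support_subset_singleton.1 h, degree_single]
  exact support_subset_singleton.1 h

theorem monomial_one_eq_prod_X_pow [Fintype σ] {R : Type*} [CommSemiring R] (a : σ →₀ ℕ) :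
    monomial a (1 : R) = ∏ i, X i ^ a i := by
  rw [monomial_eq, C_1, one_mul, prod_fintype _ _ fun _ => pow_zero _]

def fiberBinomials (R : Type*) [CommRing R] (d : σ → ℕ) : Set (MvPolynomial σ R) :=
  {f | ∃ a b, SameFiber d a b ∧ f = monomial a 1 - monomial b 1}

section Vanishing

variable [Fintype σ] (K : Type*) [Field K] (v : σ → ℕ)

def torusCharacter (a : σ →₀ ℕ) : (σ → Kˣ) →* K where
  toFun x := ∏ i, ((x i : K) ^ v i) ^ a i
  map_one' := by simp
  map_mul' x y := by simp [mul_pow, Finset.prod_mul_distrib]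

variable {K}

theorem eval_monomial_torus (x : σ → Kˣ) (a : σ →₀ ℕ) (c : K) :
    eval (fun i => (x i : K) ^ v i) (monomial a c) = c * torusCharacter K v a x := by
  rw [eval_monomial, prod_fintype _ _ fun _ => pow_zero _]
  rfl

theorem eval_torus_eq_sum (x : σ → Kˣ) (f : MvPolynomial σ K) :
    eval (fun i => (x i : K) ^ v i) f = ∑ a ∈ f.support, coeff a f * torusCharacter K v a x := by
  conv_lhs => rw [f.as_sum]
  simp only [map_sum, eval_monomial_torus]

theorem pow_mem_zpowers_pow {G : Type*} [Group G] {g x : G} (hx : x ∈ Subgroup.zpowers g)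
    (n : ℕ) : x ^ n ∈ Subgroup.zpowers (g ^ n) := by
  obtain ⟨k, rfl⟩ := hx
  exact ⟨k, by simp only [← zpow_natCast, ← zpow_mul, mul_comm]⟩

theorem torusCharacter_mulSingle [DecidableEq σ] (a : σ →₀ ℕ) (i : σ) (y : Kˣ) :
    torusCharacter K v a (Pi.mulSingle i y) = ((y ^ v i) ^ a i : Kˣ) := by
  rw [torusCharacter, MonoidHom.coe_mk, OneHom.coe_mk, Finset.prod_eq_single i
    (fun j _ hj => by rw [Pi.mulSingle_eq_of_ne hj]; simp) (by simp)]
  simp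

theorem torusCharacter_eq_iff {β : Kˣ} (hβ : ∀ x : Kˣ, x ∈ Subgroup.zpowers β)
    {a b : σ →₀ ℕ} :
    torusCharacter K v a = torusCharacter K v b ↔ ∀ i, a i ≡ b i [MOD orderOf (β ^ v i)] := by
  classical
  constructor
  · intro h i
    have hi := DFunLike.congr_fun h (Pi.mulSingle i β)
    rw [torusCharacter_mulSingle, torusCharacter_mulSingle] at hi
    exact pow_eq_pow_iff_modEq.1 (Units.ext hi)
  · intro h
    refine MonoidHom.ext fun x => ?_
    refine Finset.prod_congr rfl fun i _ => ?_
    have hord := orderOf_dvd_of_mem_zpowers (pow_mem_zpowers_pow (hβ (x i)) (v i))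
    exact_mod_cast congrArg Units.val (pow_eq_pow_iff_modEq.2 ((h i).of_dvd hord))

open Classical in
theorem sum_coeff_fiber_eq_zero {f : MvPolynomial σ K}
    (hf : ∀ x : σ → Kˣ, eval (fun i => (x i : K) ^ v i) f = 0) (φ : (σ → Kˣ) →* K) :
    ∑ a ∈ f.support with torusCharacter K v a = φ, coeff a f = 0 := by
  set Φ := f.support.image (torusCharacter K v)
  have hcomb : ∑ ψ ∈ Φ, (∑ a ∈ f.support with torusCharacter K v a = ψ, coeff a f) • ⇑ψ = 0 := by
    funext x
    simp only [Finset.sum_apply, Pi.smul_apply, smul_eq_mul, Finset.sum_mul, Pi.zero_apply]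
    rw [← hf x, eval_torus_eq_sum, ← Finset.sum_fiberwise_of_maps_to
      (fun a ha => Finset.mem_image_of_mem (torusCharacter K v) ha)]
    refine Finset.sum_congr rfl fun ψ _ => Finset.sum_congr rfl fun a ha => ?_
    rw [(Finset.mem_filter.1 ha).2]
  by_cases hφ : φ ∈ Φ
  · exact linearIndependent_iff'.1 (linearIndependent_monoidHom _ K) Φ _ hcomb φ hφ
  · refine Finset.sum_eq_zero fun a ha => absurd ?_ hφ
    rw [← (Finset.mem_filter.1 ha).2]
    exact Finset.mem_image_of_mem _ (Finset.mem_filter.1 ha).1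

variable {β : Kˣ} (hβ : ∀ x : Kˣ, x ∈ Subgroup.zpowers β)
include hβ

theorem fiberBinomials_subset_vanishing :
    fiberBinomials K (fun i => orderOf (β ^ v i)) ⊆ {f | (∃ e, f.IsHomogeneous e) ∧
      ∀ x : σ → Kˣ, eval (fun i => (x i : K) ^ v i) f = 0} := by
  rintro _ ⟨a, b, hab, rfl⟩
  refine ⟨⟨a.degree, (isHomogeneous_monomial _ rfl).sub (isHomogeneous_monomial _ hab.1.symm)⟩,
    fun x => ?_⟩
  rw [map_sub, eval_monomial_torus, eval_monomial_torus, (torusCharacter_eq_iff v hβ).2 hab.2,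
    sub_self]

theorem mem_span_fiberBinomials_of_vanishing {f : MvPolynomial σ K} {e : ℕ}
    (hhom : f.IsHomogeneous e) (hf : ∀ x : σ → Kˣ, eval (fun i => (x i : K) ^ v i) f = 0) :
    f ∈ Ideal.span (fiberBinomials K (fun i => orderOf (β ^ v i))) := by
  classical
  set χ := torusCharacter K v
  have hrep : ∀ φ ∈ f.support.image χ, ∃ b ∈ f.support, χ b = φ := fun φ hφ => by
    simpa using hφ
  choose! r hr_mem hr_char using hrep
  have hχ : ∀ a ∈ f.support, χ a ∈ f.support.image χ := fun a ha => Finset.mem_image_of_mem χ ha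
  have hreps : ∑ a ∈ f.support, coeff a f • monomial (r (χ a)) (1 : K) = 0 := by
    rw [← Finset.sum_fiberwise_of_maps_to hχ]
    refine Finset.sum_eq_zero fun φ _ => ?_
    rw [Finset.sum_congr rfl fun a ha => by rw [(Finset.mem_filter.1 ha).2], ← Finset.sum_smul,
      sum_coeff_fiber_eq_zero v hf, zero_smul]
  have hdecomp : f = ∑ a ∈ f.support, coeff a f • (monomial a 1 - monomial (r (χ a)) 1) := by
    simp_rw [smul_sub, Finset.sum_sub_distrib, hreps, sub_zero, smul_monomial, smul_eq_mul,
      mul_one]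
    exact f.as_sum
  rw [hdecomp]
  refine Ideal.sum_mem _ fun a ha => ?_
  rw [smul_eq_C_mul]
  refine Ideal.mul_mem_left _ _ (Ideal.subset_span ⟨a, r (χ a), ⟨?_, ?_⟩, rfl⟩)
  · exact (hhom.degree_eq_sum_deg_support ha).symm.trans
      (hhom.degree_eq_sum_deg_support (hr_mem _ (hχ a ha)))
  · exact (torusCharacter_eq_iff v hβ).1 (hr_char _ (hχ a ha)).symm

theorem span_vanishing_eq_span_fiberBinomials :
    Ideal.span {f : MvPolynomial σ K | (∃ e, f.IsHomogeneous e) ∧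
      ∀ x : σ → Kˣ, eval (fun i => (x i : K) ^ v i) f = 0} =
      Ideal.span (fiberBinomials K (fun i => orderOf (β ^ v i))) :=
  le_antisymm (Ideal.span_le.2 fun _ ⟨⟨_, hhom⟩, hf⟩ =>
      mem_span_fiberBinomials_of_vanishing v hβ hhom hf)
    (Ideal.span_mono (fiberBinomials_subset_vanishing v hβ))

end Vanishing

section Critical

variable (R : Type*) [CommRing R] (d : σ → ℕ)

def criticalDegrees (i : σ) : Set ℕ :=
  {n | 0 < n ∧ ∃ c : σ →₀ ℕ, c i = 0 ∧ SameFiber d (single i n) c}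

noncomputable def criticalDegree (i : σ) : ℕ := sInf (criticalDegrees d i)

noncomputable def criticalExponent (i : σ) : σ →₀ ℕ :=
  Classical.epsilon fun c => c i = 0 ∧ SameFiber d (single i (criticalDegree d i)) c

noncomputable def criticalBinomial (i : σ) : MvPolynomial σ R :=
  monomial (single i (criticalDegree d i)) 1 - monomial (criticalExponent d i) 1

noncomputable def criticalIdeal : Ideal (MvPolynomial σ R) :=
  Ideal.span (Set.range (criticalBinomial R d))

noncomputable def criticalClass (a : σ →₀ ℕ) : MvPolynomial σ R ⧸ criticalIdeal R d :=
  Ideal.Quotient.mk _ (monomial a 1)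

variable {R d}

theorem criticalClass_add (a b : σ →₀ ℕ) :
    criticalClass R d (a + b) = criticalClass R d a * criticalClass R d b := by
  simp only [criticalClass, ← map_mul, monomial_mul, mul_one]

theorem criticalDegrees_nonempty [Nontrivial σ] (hd : ∀ i, 0 < d i) (i : σ) :
    (criticalDegrees d i).Nonempty := by
  obtain ⟨j, hji⟩ := exists_ne i
  set n := d i * d j
  refine ⟨n, Nat.mul_pos (hd i) (hd j), single j n, single_eq_of_ne hji.symm, ?_, fun k => ?_⟩
  · rw [degree_single, degree_single]
  rcases eq_or_ne k i with rfl | hki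
  · rw [single_eq_same, single_eq_of_ne hji.symm]
    exact Nat.modEq_zero_iff_dvd.2 (dvd_mul_right _ _)
  rcases eq_or_ne k j with rfl | hkj
  · rw [single_eq_same, single_eq_of_ne hki]
    exact (Nat.modEq_zero_iff_dvd.2 (dvd_mul_left _ _)).symm
  · rw [single_eq_of_ne hki, single_eq_of_ne hkj]

theorem criticalClass_eq_of_sameFiber_of_pos {n : ℕ}
    (ih : ∀ a b : σ →₀ ℕ, a.degree < n → SameFiber d a b →
      criticalClass R d a = criticalClass R d b)
    {a b : σ →₀ ℕ} (h : SameFiber d a b) (ha : a.degree = n) {i : σ} (hai : 0 < a i)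
    (hbi : 0 < b i) : criticalClass R d a = criticalClass R d b := by
  obtain ⟨a', rfl⟩ := exists_add_of_le (single_le_iff.2 hai : single i 1 ≤ a)
  obtain ⟨b', rfl⟩ := exists_add_of_le (single_le_iff.2 hbi : single i 1 ≤ b)
  rw [criticalClass_add, criticalClass_add,
    ih a' b' (by simp [← ha]) (sameFiber_add_left_iff.1 h)]

variable [Nontrivial σ] (hd : ∀ i, 0 < d i)
include hd

theorem criticalDegree_mem (i : σ) : criticalDegree d i ∈ criticalDegrees d i :=
  Nat.sInf_mem (criticalDegrees_nonempty hd i)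

theorem criticalExponent_spec (i : σ) :
    criticalExponent d i i = 0 ∧
      SameFiber d (single i (criticalDegree d i)) (criticalExponent d i) :=
  Classical.epsilon_spec (criticalDegree_mem hd i).2

theorem criticalBinomial_mem_fiberBinomials (i : σ) :
    criticalBinomial R d i ∈ fiberBinomials R d :=
  ⟨_, _, (criticalExponent_spec hd i).2, rfl⟩

theorem exists_pos_criticalExponent (i : σ) : ∃ k ≠ i, 0 < criticalExponent d i k := by
  obtain ⟨hi, hfib⟩ := criticalExponent_spec hd i
  have hne : criticalExponent d i ≠ 0 := by
    intro h0
    have hdeg := hfib.1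
    rw [degree_single, h0, map_zero] at hdeg
    exact (criticalDegree_mem hd i).1.ne' hdeg
  obtain ⟨k, hk⟩ := Finsupp.ne_iff.1 hne
  exact ⟨k, fun hki => hk (hki ▸ hi), Nat.pos_of_ne_zero hk⟩

theorem exists_criticalClass_single_eq {i : σ} {n : ℕ} {b : σ →₀ ℕ} (hn : 0 < n)
    (h : SameFiber d (single i n) b) (hb : b i = 0) :
    ∃ k ≠ i, ∃ a : σ →₀ ℕ, 0 < a k ∧ SameFiber d (single i n) a ∧
      criticalClass R d (single i n) = criticalClass R d a := by
  have hle : criticalDegree d i ≤ n := Nat.sInf_le ⟨hn, b, hb, h⟩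
  obtain ⟨k, hki, hk⟩ := exists_pos_criticalExponent hd i
  have hsplit :
      single i n = single i (n - criticalDegree d i) + single i (criticalDegree d i) := by
    rw [← single_add, Nat.sub_add_cancel hle]
  refine ⟨k, hki, single i (n - criticalDegree d i) + criticalExponent d i, ?_, ?_, ?_⟩
  · rwa [Finsupp.add_apply, single_eq_of_ne hki, zero_add]
  · rw [hsplit]
    exact sameFiber_add_left_iff.2 (criticalExponent_spec hd i).2
  · rw [hsplit, criticalClass_add, criticalClass_add]
    congr 1
    exact Ideal.Quotient.eq.2 (Ideal.subset_span ⟨i, rfl⟩)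

end Critical

section Plane

theorem fin_three_exists_ne_ne (i k : Fin 3) : ∃ j, j ≠ i ∧ j ≠ k := by
  decide +revert

theorem fin_three_eq_or_eq_of_ne {i j k : Fin 3} (hik : i ≠ k) (hji : j ≠ i) (hjk : j ≠ k)
    (l : Fin 3) (hlj : l ≠ j) : l = i ∨ l = k := by
  decide +revert

theorem exists_eq_single_of_disjoint {a b : Fin 3 →₀ ℕ} (h : ∀ i, a i = 0 ∨ b i = 0) :
    (∃ i, a = single i a.degree) ∨ ∃ i, b = single i b.degree := by
  have hdisj : Disjoint a.support b.support := Finset.disjoint_left.2 fun i ha hb => by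
    rw [Finsupp.mem_support_iff] at ha hb
    exact (h i).elim ha hb
  have hcard := Finset.card_le_univ (a.support ∪ b.support)
  rw [Finset.card_union_of_disjoint hdisj, Fintype.card_fin] at hcard
  have hsingle : ∀ c : Fin 3 →₀ ℕ, c.support.card ≤ 1 → ∃ i, c = single i c.degree := fun c hc =>
    (Finset.card_le_one_iff_subset_singleton.1 hc).imp fun _ => eq_single_degree_of_support_subset
  rcases le_or_gt a.support.card 1 with ha | ha
  · exact Or.inl (hsingle a ha)
  · exact Or.inr (hsingle b (by omega))

variable {R : Type*} [CommRing R] {d : Fin 3 → ℕ} (hd : ∀ i, 0 < d i)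
include hd

theorem criticalClass_single_eq_of_sameFiber {n : ℕ}
    (ih : ∀ a b : Fin 3 →₀ ℕ, a.degree < n → SameFiber d a b →
      criticalClass R d a = criticalClass R d b)
    (hn : 0 < n) {i : Fin 3} {b : Fin 3 →₀ ℕ} (h : SameFiber d (single i n) b) (hb : b i = 0) :
    criticalClass R d (single i n) = criticalClass R d b := by
  have hdeg : ∀ {c}, SameFiber d (single i n) c → c.degree = n := fun hc => by
    rw [← hc.1, degree_single]
  obtain ⟨k, hki, a, hak, ha, hca⟩ := exists_criticalClass_single_eq (R := R) hd hn h hb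
  by_cases hbk : 0 < b k
  · rw [hca]
    exact criticalClass_eq_of_sameFiber_of_pos ih (ha.symm.trans h) (hdeg ha) hak hbk
  obtain ⟨j, hji, hjk⟩ := fin_three_exists_ne_ne i k
  have hthird := fin_three_eq_or_eq_of_ne hki.symm hji hjk
  -- `b` involves neither `tᵢ` nor `t_k`, so it is a pure power of the third variable
  obtain rfl : b = single j n := by
    have hsupp : b.support ⊆ {j} := fun l hl => by
      rw [Finsupp.mem_support_iff] at hl
      by_contra hlj
      rcases hthird l (Finset.notMem_singleton.1 hlj) with rfl | rfl
      exacts [hl hb, hl (by omega)]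
    rw [eq_single_degree_of_support_subset hsupp, hdeg h]
  obtain ⟨l, hlj, b', hbl, hb', hcb'⟩ :=
    exists_criticalClass_single_eq (R := R) hd hn h.symm (single_eq_of_ne hji)
  rw [hcb']
  rcases hthird l hlj with rfl | rfl
  · exact criticalClass_eq_of_sameFiber_of_pos ih (h.trans hb') (degree_single _ _)
      (by rwa [single_eq_same]) hbl
  · rw [hca]
    exact criticalClass_eq_of_sameFiber_of_pos ih (ha.symm.trans (h.trans hb')) (hdeg ha) hak hbl

theorem criticalClass_eq_of_sameFiber {a b : Fin 3 →₀ ℕ} (h : SameFiber d a b) :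
    criticalClass R d a = criticalClass R d b := by
  induction hn : a.degree using Nat.strong_induction_on generalizing a b with
  | _ n ih' =>
  have ih : ∀ a b : Fin 3 →₀ ℕ, a.degree < n → SameFiber d a b →
      criticalClass R d a = criticalClass R d b := fun a b ha hab => ih' _ ha hab rfl
  by_cases hshare : ∃ i, 0 < a i ∧ 0 < b i
  · obtain ⟨i, hai, hbi⟩ := hshare
    exact criticalClass_eq_of_sameFiber_of_pos ih h hn hai hbi
  push Not at hshare
  rcases n.eq_zero_or_pos with rfl | hn0
  · rw [(degree_eq_zero_iff a).1 hn, (degree_eq_zero_iff b).1 (h.1 ▸ hn)]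
  have hdisj : ∀ i, a i = 0 ∨ b i = 0 := fun i => by have := hshare i; omega
  rcases exists_eq_single_of_disjoint hdisj with ⟨i, ha⟩ | ⟨i, hb⟩
  · rw [hn] at ha
    subst ha
    exact criticalClass_single_eq_of_sameFiber hd ih hn0 h (by simpa [hn0] using hshare i)
  · rw [← h.1, hn] at hb
    subst hb
    exact (criticalClass_single_eq_of_sameFiber hd ih hn0 h.symm
      (Nat.eq_zero_of_not_pos fun hai => hn0.ne' (by simpa using hshare i hai))).symm

theorem span_fiberBinomials_eq_criticalIdeal :
    Ideal.span (fiberBinomials R d) = criticalIdeal R d :=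
  le_antisymm
    (Ideal.span_le.2 fun _ ⟨_, _, hab, hf⟩ => hf ▸ Ideal.Quotient.eq.1
      (criticalClass_eq_of_sameFiber hd hab))
    (Ideal.span_mono (Set.range_subset_iff.2 (criticalBinomial_mem_fiberBinomials hd)))

end Plane

end DegenerateTorus

open DegenerateTorus in
theorem vanishing_ideal_dim3_minimally_generated_by_three_binomials_general
    (K : Type) [Field K] [Fintype K]
    (v : Fin 3 → ℕ)
    (β : Kˣ) (hβ : ∀ x : Kˣ, x ∈ Subgroup.zpowers β)
    (IX : Ideal (MvPolynomial (Fin 3) K))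
    (hIX : IX = Ideal.span {f : MvPolynomial (Fin 3) K |
      (∃ e, f.IsHomogeneous e) ∧
      ∀ x : Fin 3 → Kˣ, eval (fun i => (x i : K) ^ v i) f = 0}) :
    ∃ G : Finset (MvPolynomial (Fin 3) K),
      G.card ≤ 3 ∧
      (∀ f ∈ G, ∃ a b : Fin 3 → ℕ,
        f = (∏ j, X j ^ a j) - ∏ j, X j ^ b j) ∧
      Ideal.span (G : Set (MvPolynomial (Fin 3) K)) = IX ∧
      ∀ G' : Finset (MvPolynomial (Fin 3) K), G' ⊂ G →
        Ideal.span (G' : Set (MvPolynomial (Fin 3) K)) ≠ IX := by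
  classical
  have hd : ∀ i, 0 < orderOf (β ^ v i) := fun i => orderOf_pos _
  have hspan :
      Ideal.span ↑(Finset.univ.image (criticalBinomial K fun i => orderOf (β ^ v i))) = IX := by
    rw [hIX, span_vanishing_eq_span_fiberBinomials v hβ, span_fiberBinomials_eq_criticalIdeal hd,
      Finset.coe_image, Finset.coe_univ, Set.image_univ, criticalIdeal]
  obtain ⟨G, hGsub, hGmin⟩ := exists_minimal_le_of_wellFoundedLT
    (fun G : Finset (MvPolynomial (Fin 3) K) => Ideal.span (G : Set _) = IX) _ hspan
  refine ⟨G, (Finset.card_le_card hGsub).trans (Finset.card_image_le.trans (by simp)),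
    fun f hf => ?_, hGmin.prop, fun G' hG' => hGmin.not_prop_of_lt hG'⟩
  obtain ⟨i, -, rfl⟩ := Finset.mem_image.1 (hGsub hf)
  exact ⟨_, _, by rw [criticalBinomial, monomial_one_eq_prod_X_pow, monomial_one_eq_prod_X_pow]⟩

/-- **Corollary.** For `n = 3`, the vanishing ideal `IX` of the degenerate projective
torus in `ℙ²` parameterized by `x_1^{v_1}, x_2^{v_2}, x_3^{v_3}` is minimally generated
by at most `3` binomials: there is a finite set `G` of at most three binomials generating
`IX` such that no proper subset of `G` generates `IX`. -/
theorem vanishing_ideal_dim3_minimally_generated_by_three_binomials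
    (K : Type) [Field K] [Fintype K]
    (v : Fin 3 → ℕ) (hv : ∀ i, 0 < v i)
    (β : Kˣ) (hβ : ∀ x : Kˣ, x ∈ Subgroup.zpowers β)
    (IX : Ideal (MvPolynomial (Fin 3) K))
    (hIX : IX = Ideal.span {f : MvPolynomial (Fin 3) K |
      (∃ e, f.IsHomogeneous e) ∧
      ∀ x : Fin 3 → Kˣ, eval (fun i => (x i : K) ^ v i) f = 0}) :
    ∃ G : Finset (MvPolynomial (Fin 3) K),
      G.card ≤ 3 ∧
      (∀ f ∈ G, ∃ a b : Fin 3 → ℕ,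
        f = (∏ j, X j ^ a j) - ∏ j, X j ^ b j) ∧
      Ideal.span (G : Set (MvPolynomial (Fin 3) K)) = IX ∧
      ∀ G' : Finset (MvPolynomial (Fin 3) K), G' ⊂ G →
        Ideal.span (G' : Set (MvPolynomial (Fin 3) K)) ≠ IX :=
  vanishing_ideal_dim3_minimally_generated_by_three_binomials_general K v β hβ IX hIX
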